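/- arXiv:2107.14084 — 2 statements merged into one kernel-verified Lean document; each statement's English description precedes it below -/
import Mathlib

section
/- Let G and G' be simple graphs, H = {H_v}_{v∈V} and H' = {H'_{v'}}_{v'∈V'} families of groups indexed by their vertices, f_G : G → G' a graph homomorphism, and f_v : H_v → H'_{f_G(v)} an injective group homomorphism for each vertex v of G. Then the induced map M(f_G,{f_v}) is well defined (it sends every element of M(G,H) to an element of M(G',H')) and is a homomorphism of partial groups M(G,H) → M(G',H'); moreover it has torsion-free kernel. -/
set_option linter.unusedSectionVars false

open Monoid

namespace PaperPG

/-! ### Generic notions: letters, reduced / cyclically reduced words, reduced forms -/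

section Letters

variable {ι : Type*} (H : ι → Type*) [∀ i, Group (H i)]

/-- A letter: a vertex/index together with an element of the corresponding group. -/
abbrev Ltr : Type _ := (i : ι) × H i

/-- A (combinatorially) reduced word: all letters are non-identity and adjacent letters
belong to distinct factors. -/
def IsRed (l : List (Ltr H)) : Prop :=
  (∀ x ∈ l, x.2 ≠ 1) ∧ l.Chain' fun a b => a.1 ≠ b.1

/-- A cyclically reduced word: reduced, and if it has length at least `2`, its first and last
letters belong to distinct factors. -/
def IsCycRed (l : List (Ltr H)) : Prop :=
  IsRed H l ∧ ∀ a ∈ l.head?, ∀ b ∈ l.getLast?, 2 ≤ l.length → a.1 ≠ b.1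

theorem isRed_nil : IsRed H ([] : List (Ltr H)) := by
  constructor <;> simp [List.Chain']

theorem isCycRed_nil : IsCycRed H ([] : List (Ltr H)) := by
  refine ⟨isRed_nil H, ?_⟩
  simp

theorem isCycRed_single (x : Ltr H) (hx : x.2 ≠ 1) : IsCycRed H [x] := by
  refine ⟨⟨by simpa using hx, by simp [List.Chain']⟩, ?_⟩
  simp

variable [DecidableEq ι] [∀ i, DecidableEq (H i)]

/-- The element of the free product `∗_{i} H i` determined by a word. -/
noncomputable def listProd (l : List (Ltr H)) : CoprodI H :=
  (l.map fun x => CoprodI.of x.2).prod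

/-- The reduced form of a word: the unique reduced word representing the product of its
letters in the free product `∗_i H i`. -/
noncomputable def red (l : List (Ltr H)) : List (Ltr H) :=
  (CoprodI.Word.equiv (listProd H l)).toList

/-- The set of indices (vertices) occurring in a word. -/
def verts (l : List (Ltr H)) : Set ι := {i | ∃ x ∈ l, x.1 = i}

/-- The formal inverse of a word: invert every letter and reverse. -/
def rawInv (l : List (Ltr H)) : List (Ltr H) :=
  (l.map fun x => (⟨x.1, x.2⁻¹⟩ : Ltr H)).reverse

end Letters

/-! ### Homomorphisms of (the underlying data of) partial groups -/

/-- `f` is a homomorphism of partial groups, from the partial group with domain `D₁` and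
product `P₁` to the one with domain `D₂` and product `P₂`. -/
def IsHom {M N : Type*} (D₁ : Set (List M)) (P₁ : List M → M)
    (D₂ : Set (List N)) (P₂ : List N → N) (f : M → N) : Prop :=
  (∀ u ∈ D₁, u.map f ∈ D₂) ∧ ∀ u ∈ D₁, P₂ (u.map f) = f (P₁ u)

theorem isHom_id {M : Type*} (D : Set (List M)) (P : List M → M) : IsHom D P D P id := by
  constructor <;> intro u hu <;> simp [hu]

theorem IsHom.comp {M₁ M₂ M₃ : Type*} {D₁ : Set (List M₁)} {P₁ : List M₁ → M₁}
    {D₂ : Set (List M₂)} {P₂ : List M₂ → M₂} {D₃ : Set (List M₃)} {P₃ : List M₃ → M₃}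
    {g : M₂ → M₃} {f : M₁ → M₂} (hg : IsHom D₂ P₂ D₃ P₃ g) (hf : IsHom D₁ P₁ D₂ P₂ f) :
    IsHom D₁ P₁ D₃ P₃ (g ∘ f) := by
  refine ⟨fun u hu => ?_, fun u hu => ?_⟩
  · rw [← List.map_map]
    exact hg.1 _ (hf.1 u hu)
  · rw [← List.map_map, hg.2 _ (hf.1 u hu), hf.2 u hu]
    rfl

/-! ### The partial group `M(G, H)` associated to a decorated graph -/

section Graph

variable {ι : Type*} (H : ι → Type*) [∀ i, Group (H i)]
  [DecidableEq ι] [∀ i, DecidableEq (H i)] (G : SimpleGraph ι)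

/-- Membership in `M(G,H)`: a cyclically reduced word whose set of vertices is a clique. -/
def Mem (l : List (Ltr H)) : Prop := IsCycRed H l ∧ G.IsClique (verts H l)

theorem mem_nil : Mem H G [] := by
  refine ⟨isCycRed_nil H, ?_⟩
  simp [verts, SimpleGraph.isClique_iff, Set.Pairwise]

theorem mem_single (v : ι) (h : H v) (hne : h ≠ 1) : Mem H G [⟨v, h⟩] := by
  refine ⟨isCycRed_single H _ hne, ?_⟩
  simp only [verts, SimpleGraph.isClique_iff, Set.Pairwise, List.mem_singleton]
  rintro a ⟨x, hx, rfl⟩ b ⟨y, hy, rfl⟩ hne'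
  subst hx; subst hy
  exact absurd rfl hne'

/-- A word with letters elements of `M(G,H)` is in the domain `D(G,H)` iff all its letters are
elements of `M(G,H)`, all occurring vertices lie in a common clique, and the reduced form of
any subproduct `u_i ⋯ u_j` is cyclically reduced. -/
def InD (W : List (List (Ltr H))) : Prop :=
  (∀ u ∈ W, Mem H G u) ∧
  G.IsClique {i | ∃ u ∈ W, i ∈ verts H u} ∧
  ∀ i j : ℕ, i ≤ j → j < W.length →
    IsCycRed H (red H (((W.drop i).take (j + 1 - i)).flatten))

/-- The underlying set of the partial group `M(G,H)`. -/
def Carrier : Type _ := {l : List (Ltr H) // Mem H G l}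

/-- The domain of the partial group `M(G,H)`. -/
def pgD : Set (List (Carrier H G)) := {W | InD H G (W.map Subtype.val)}

/-- The unit of the partial group `M(G,H)`: the empty word. -/
def one : Carrier H G := ⟨[], mem_nil H G⟩

/-- The product map of the partial group `M(G,H)`: the reduced form of the concatenation
(junk value `1` outside of the domain). -/
noncomputable def pgPi (W : List (Carrier H G)) : Carrier H G := by
  classical exact if h : Mem H G (red H (W.map Subtype.val).flatten) then ⟨_, h⟩ else one H G

/-- The inversion of the partial group `M(G,H)` (junk value `1` if the result were not a
member, which never happens). -/
noncomputable def invCar (x : Carrier H G) : Carrier H G := by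
  classical exact if h : Mem H G (rawInv H x.val) then ⟨_, h⟩ else one H G

/-- The subset `H̃ᵥ` of `M(G,H)`: the empty word together with the one-letter words with
letter a nontrivial element of `H v`. -/
def Htilde (v : ι) : Set (Carrier H G) :=
  {x | x.val = [] ∨ ∃ h : H v, h ≠ 1 ∧ x.val = [⟨v, h⟩]}

end Graph

/-! ### Induced maps -/

section Induced

variable {ι ι' : Type*} (H : ι → Type*) [∀ i, Group (H i)]
  [DecidableEq ι] [∀ i, DecidableEq (H i)] (G : SimpleGraph ι)
  (H' : ι' → Type*) [∀ i, Group (H' i)]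
  [DecidableEq ι'] [∀ i, DecidableEq (H' i)] (G' : SimpleGraph ι')

/-- The letterwise map on words induced by a map of vertices `fG` and group homomorphisms
`fH v : H v →* H' (fG v)`. -/
def rawInduced (fG : ι → ι') (fH : ∀ i, H i →* H' (fG i)) (l : List (Ltr H)) :
    List (Ltr H') :=
  l.map fun x => ⟨fG x.1, fH x.1 x.2⟩

/-- The map `M(f_G, {f_v}) : M(G,H) → M(G',H')` (junk value `1` if the image word were not a
member; this never happens when the `fH v` are injective). -/
noncomputable def inducedCar (fG : ι → ι') (fH : ∀ i, H i →* H' (fG i))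
    (x : Carrier H G) : Carrier H' G' := by
  classical exact if h : Mem H' G' (rawInduced H H' fG fH x.val) then ⟨_, h⟩ else one H' G'

/-- A homomorphism of partial groups `M(G,H) → M(G',H')` has torsion-free kernel if the only
element of finite order (as an element of the ambient free product) sent to `1` is `1`. -/
def TFKer (f : Carrier H G → Carrier H' G') : Prop :=
  ∀ x : Carrier H G, f x = one H' G' → IsOfFinOrder (listProd H x.val) → x = one H G

end Induced

/-! ### Automorphism groups -/

section Aut

variable {ι : Type*} (H : ι → Type*) [∀ i, Group (H i)]
  [DecidableEq ι] [∀ i, DecidableEq (H i)] (G : SimpleGraph ι)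

/-- The automorphism group of the partial group `M(G,H)`, as a subgroup of the permutation
group of its carrier: bijections that are homomorphisms in both directions. -/
noncomputable def pgAut : Subgroup (Equiv.Perm (Carrier H G)) where
  carrier := {f | IsHom (pgD H G) (pgPi H G) (pgD H G) (pgPi H G) f ∧
    IsHom (pgD H G) (pgPi H G) (pgD H G) (pgPi H G) f.symm}
  one_mem' := ⟨isHom_id _ _, isHom_id _ _⟩
  mul_mem' := by
    rintro f g ⟨hf, hf'⟩ ⟨hg, hg'⟩
    exact ⟨hf.comp hg, hg'.comp hf'⟩
  inv_mem' := by
    rintro f ⟨hf, hf'⟩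
    exact ⟨hf', by simpa [Equiv.Perm.inv_def] using hf⟩

/-- The automorphism group of a simple graph, as a subgroup of the permutation group of its
vertices: bijections such that both the map and its inverse send edges to edges. -/
def graphAut : Subgroup (Equiv.Perm ι) where
  carrier := {σ | (∀ a b, G.Adj a b → G.Adj (σ a) (σ b)) ∧
    (∀ a b, G.Adj a b → G.Adj (σ.symm a) (σ.symm b))}
  one_mem' := ⟨fun a b h => h, fun a b h => h⟩
  mul_mem' := by
    rintro f g ⟨hf, hf'⟩ ⟨hg, hg'⟩
    exact ⟨fun a b h => hf _ _ (hg _ _ h), fun a b h => hg' _ _ (hf' _ _ h)⟩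
  inv_mem' := by
    rintro f ⟨hf, hf'⟩
    exact ⟨hf', by simpa [Equiv.Perm.inv_def] using hf⟩

/-- An automorphism `f` of `M(G,H)` covers the vertex map `σ` if for every vertex `v`,
`f` sends the nontrivial elements of `H̃ᵥ` into `H̃_{σ v}`. -/
def CoversVia (f : Carrier H G → Carrier H G) (σ : ι → ι) : Prop :=
  ∀ (v : ι) (h : H v) (hne : h ≠ 1),
    ∃ h' : H (σ v), h' ≠ 1 ∧ (f ⟨[⟨v, h⟩], mem_single H G v h hne⟩).val = [⟨σ v, h'⟩]

end Aut

/-! ### Subgroups and locally finite subgroups of partial groups -/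

/-- A subset `N` is a subgroup of the partial group with data `(D, P, inv)`: it is closed
under inversion, every word with letters in `N` is in the domain `D`, and `P` maps such
words into `N`. -/
def IsSubgroupOf {M : Type*} (D : Set (List M)) (P : List M → M) (inv : M → M)
    (N : Set M) : Prop :=
  (∀ x ∈ N, inv x ∈ N) ∧ ∀ W : List M, (∀ u ∈ W, u ∈ N) → W ∈ D ∧ P W ∈ N

/-- A subgroup `N` of a partial group is locally finite: every finite subset of `N` is
contained in a finite subgroup contained in `N` (i.e. every finitely generated subgroup of the
group `N` is finite). -/
def IsLocFinSubgroupOf {M : Type*} (D : Set (List M)) (P : List M → M) (inv : M → M)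
    (N : Set M) : Prop :=
  IsSubgroupOf D P inv N ∧
    ∀ S : Set M, S ⊆ N → S.Finite →
      ∃ K : Set M, S ⊆ K ∧ K ⊆ N ∧ IsSubgroupOf D P inv K ∧ K.Finite

end PaperPG

namespace PaperPG

section Helpers

open Monoid CoprodI

variable {ι ι' ι'' : Type*} (H : ι → Type*) [∀ i, Group (H i)]
  [DecidableEq ι] [∀ i, DecidableEq (H i)]
  (H' : ι' → Type*) [∀ i, Group (H' i)]
  [DecidableEq ι'] [∀ i, DecidableEq (H' i)]
  (H'' : ι'' → Type*) [∀ i, Group (H'' i)]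
  [DecidableEq ι''] [∀ i, DecidableEq (H'' i)]

theorem listProd_red (l : List (Ltr H)) : listProd H (red H l) = listProd H l := by
  have h : listProd H (red H l) = Word.prod (Word.equiv (listProd H l)) := rfl
  have h2 : Word.prod (Word.equiv (listProd H l))
      = Word.equiv.symm (Word.equiv (listProd H l)) := rfl
  rw [h, h2, Equiv.symm_apply_apply]

theorem isRed_red (l : List (Ltr H)) : IsRed H (red H l) :=
  ⟨(Word.equiv (listProd H l)).ne_one, (Word.equiv (listProd H l)).chain_ne⟩

theorem red_of_isRed {l : List (Ltr H)} (h : IsRed H l) : red H l = l := by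
  have h1 : listProd H l = Word.prod ⟨l, h.1, h.2⟩ := rfl
  have h2 : Word.prod (⟨l, h.1, h.2⟩ : Word H) = Word.equiv.symm ⟨l, h.1, h.2⟩ := rfl
  unfold red
  rw [h1, h2, Equiv.apply_symm_apply]

theorem red_congr {l m : List (Ltr H)} (h : listProd H l = listProd H m) :
    red H l = red H m := by
  unfold red; rw [h]

variable {H H'}

theorem verts_rawInduced (fG : ι → ι') (fH : ∀ i, H i →* H' (fG i)) (l : List (Ltr H)) :
    verts H' (rawInduced H H' fG fH l) = fG '' verts H l := by
  ext i'
  simp only [verts, rawInduced, Set.mem_setOf_eq, List.mem_map, Set.mem_image]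
  constructor
  · rintro ⟨x, ⟨y, hy, rfl⟩, rfl⟩
    exact ⟨y.1, ⟨y, hy, rfl⟩, rfl⟩
  · rintro ⟨a, ⟨y, hy, rfl⟩, rfl⟩
    exact ⟨_, ⟨y, hy, rfl⟩, rfl⟩

theorem listProd_rawInduced (fG : ι → ι') (fH : ∀ i, H i →* H' (fG i)) (l : List (Ltr H)) :
    listProd H' (rawInduced H H' fG fH l)
      = CoprodI.lift (fun i => (CoprodI.of : H' (fG i) →* CoprodI H').comp (fH i))
          (listProd H l) := by
  induction l with
  | nil => simp [listProd, rawInduced]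
  | cons a l ih =>
    simp only [listProd, rawInduced, List.map_cons, List.prod_cons] at ih ⊢
    rw [ih, map_mul, CoprodI.lift_of]
    rfl

theorem isRed_rawInduced {fG : ι → ι'} {fH : ∀ i, H i →* H' (fG i)}
    (hfH : ∀ i, Function.Injective (fH i)) {l : List (Ltr H)} (h : IsRed H l)
    (hinj : ∀ a ∈ verts H l, ∀ b ∈ verts H l, a ≠ b → fG a ≠ fG b) :
    IsRed H' (rawInduced H H' fG fH l) := by
  constructor
  · intro x hx
    rw [rawInduced, List.mem_map] at hx
    obtain ⟨y, hy, rfl⟩ := hx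
    intro h1
    exact h.1 y hy (hfH y.1 (by simpa using h1))
  · unfold List.Chain'
    rw [rawInduced, List.isChain_map]
    rw [List.isChain_iff_getElem] at *
    intro i hi
    have h2 := (List.isChain_iff_getElem.mp h.2) i hi
    exact hinj _ ⟨_, List.getElem_mem _, rfl⟩ _ ⟨_, List.getElem_mem _, rfl⟩ h2

theorem isCycRed_rawInduced {fG : ι → ι'} {fH : ∀ i, H i →* H' (fG i)}
    (hfH : ∀ i, Function.Injective (fH i)) {l : List (Ltr H)} (h : IsCycRed H l)
    (hinj : ∀ a ∈ verts H l, ∀ b ∈ verts H l, a ≠ b → fG a ≠ fG b) :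
    IsCycRed H' (rawInduced H H' fG fH l) := by
  refine ⟨isRed_rawInduced hfH h.1 hinj, ?_⟩
  intro a ha b hb hlen
  rw [rawInduced, List.head?_map] at ha
  rw [rawInduced, List.getLast?_map] at hb
  rw [Option.mem_map] at ha hb
  obtain ⟨a₀, ha₀, rfl⟩ := ha
  obtain ⟨b₀, hb₀, rfl⟩ := hb
  rw [rawInduced, List.length_map] at hlen
  have hne := h.2 a₀ ha₀ b₀ hb₀ hlen
  exact hinj _ ⟨_, List.mem_of_mem_head? ha₀, rfl⟩ _ ⟨_, List.mem_of_mem_getLast? hb₀, rfl⟩ hne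

theorem rawInduced_comp (fG : ι → ι') (fH : ∀ i, H i →* H' (fG i))
    (fG' : ι' → ι'') (fH' : ∀ i, H' i →* H'' (fG' i)) (l : List (Ltr H)) :
    rawInduced H' H'' fG' fH' (rawInduced H H' fG fH l)
      = rawInduced H H'' (fun i => fG' (fG i)) (fun i => (fH' (fG i)).comp (fH i)) l := by
  simp only [rawInduced, List.map_map]
  rfl

theorem red_rawInduced_of_injective {fG : ι → ι'} {fH : ∀ i, H i →* H' (fG i)}
    (hfG : Function.Injective fG) (hfH : ∀ i, Function.Injective (fH i)) (l : List (Ltr H)) :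
    red H' (rawInduced H H' fG fH l) = rawInduced H H' fG fH (red H l) := by
  have h1 : red H' (rawInduced H H' fG fH l) = red H' (rawInduced H H' fG fH (red H l)) := by
    apply red_congr
    rw [listProd_rawInduced, listProd_rawInduced, listProd_red]
  rw [h1]
  apply red_of_isRed
  apply isRed_rawInduced hfH (isRed_red H l)
  intro a _ b _ hab hc
  exact hab (hfG hc)

theorem exists_factor (S : Set ι) (l : List (Ltr H)) (hl : verts H l ⊆ S) :
    ∃ l₀ : List (Ltr (fun i : S => H i.1)),
      rawInduced (fun i : S => H i.1) H (fun i => i.1)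
        (fun i => MonoidHom.id (H i.1)) l₀ = l := by
  refine ⟨l.attach.map fun x => ⟨⟨x.1.1, hl ⟨x.1, x.2, rfl⟩⟩, x.1.2⟩, ?_⟩
  simp only [rawInduced, List.map_map]
  have : (fun x : {x // x ∈ l} =>
      (⟨x.1.1, x.1.2⟩ : Ltr H)) = fun x : {x // x ∈ l} => x.1 := by
    funext x; rfl
  rw [Function.comp_def]
  simp only [MonoidHom.id_apply]
  rw [this]
  exact l.attach_map_subtype_val

theorem red_rawInduced_of_injOn {fG : ι → ι'} {fH : ∀ i, H i →* H' (fG i)}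
    (hfH : ∀ i, Function.Injective (fH i)) {S : Set ι}
    (hS : ∀ a ∈ S, ∀ b ∈ S, fG a = fG b → a = b)
    {l : List (Ltr H)} (hl : verts H l ⊆ S) :
    red H' (rawInduced H H' fG fH l) = rawInduced H H' fG fH (red H l) := by
  obtain ⟨l₀, rfl⟩ := exists_factor S l hl
  have hval : Function.Injective (fun i : S => (i : ι)) := Subtype.val_injective
  have hid : ∀ i : S, Function.Injective (MonoidHom.id (H i.1)) := fun i => fun _ _ h => h
  rw [red_rawInduced_of_injective hval hid, rawInduced_comp, rawInduced_comp]
  apply red_rawInduced_of_injective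
  · intro a b hab
    exact Subtype.ext (hS a.1 a.2 b.1 b.2 hab)
  · intro i x y hxy
    exact hfH _ hxy

theorem verts_red (l : List (Ltr H)) : verts H (red H l) ⊆ verts H l := by
  obtain ⟨l₀, hl₀⟩ := exists_factor (verts H l) l subset_rfl
  have hval : Function.Injective (fun i : verts H l => (i : ι)) := Subtype.val_injective
  have hid : ∀ i : verts H l, Function.Injective (MonoidHom.id (H i.1)) :=
    fun i => fun _ _ h => h
  rw [← hl₀, red_rawInduced_of_injective hval hid, verts_rawInduced]
  rintro i ⟨j, _, rfl⟩
  rw [hl₀]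
  exact j.2

theorem injOn_of_clique {G : SimpleGraph ι} {G' : SimpleGraph ι'} {fG : ι → ι'}
    (hfG : ∀ a b, G.Adj a b → G'.Adj (fG a) (fG b)) {S : Set ι} (hS : G.IsClique S) :
    ∀ a ∈ S, ∀ b ∈ S, a ≠ b → fG a ≠ fG b := by
  intro a ha b hb hab
  exact (hfG a b (hS ha hb hab)).ne

theorem isClique_image {G : SimpleGraph ι} {G' : SimpleGraph ι'} {fG : ι → ι'}
    (hfG : ∀ a b, G.Adj a b → G'.Adj (fG a) (fG b)) {S : Set ι} (hS : G.IsClique S) :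
    G'.IsClique (fG '' S) := by
  rintro _ ⟨a, ha, rfl⟩ _ ⟨b, hb, rfl⟩ hne
  have hab : a ≠ b := fun h => hne (by rw [h])
  exact hfG a b (hS ha hb hab)

theorem mem_rawInduced {G : SimpleGraph ι} {G' : SimpleGraph ι'} {fG : ι → ι'}
    {fH : ∀ i, H i →* H' (fG i)}
    (hfG : ∀ a b, G.Adj a b → G'.Adj (fG a) (fG b))
    (hfH : ∀ i, Function.Injective (fH i)) {l : List (Ltr H)} (h : Mem H G l) :
    Mem H' G' (rawInduced H H' fG fH l) := by
  refine ⟨isCycRed_rawInduced hfH h.1 (injOn_of_clique hfG h.2), ?_⟩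
  rw [verts_rawInduced]
  exact isClique_image hfG h.2

end Helpers


/-- The map induced by a graph homomorphism `f_G` and injective group
homomorphisms `f_v : H_v → H'_{f_G v}` is well defined, is a homomorphism of partial groups
`M(G,H) → M(G',H')`, and has torsion-free kernel. -/
theorem statement1 {ι ι' : Type*} (H : ι → Type*) [∀ i, Group (H i)]
    [DecidableEq ι] [∀ i, DecidableEq (H i)] (G : SimpleGraph ι)
    (H' : ι' → Type*) [∀ i, Group (H' i)] [DecidableEq ι'] [∀ i, DecidableEq (H' i)]
    (G' : SimpleGraph ι')
    (fG : ι → ι') (hfG : ∀ a b : ι, G.Adj a b → G'.Adj (fG a) (fG b))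
    (fH : ∀ i, H i →* H' (fG i)) (hinj : ∀ i, Function.Injective (fH i)) :
    -- the induced map is well defined: it sends elements of `M(G,H)` to elements of
    -- `M(G',H')`, acting letterwise
    (∀ x : Carrier H G, Mem H' G' (rawInduced H H' fG fH x.val) ∧
      (inducedCar H G H' G' fG fH x).val = rawInduced H H' fG fH x.val) ∧
    -- it is a homomorphism of partial groups
    IsHom (pgD H G) (pgPi H G) (pgD H' G') (pgPi H' G') (inducedCar H G H' G' fG fH) ∧
    -- it has torsion-free kernel
    TFKer H G H' G' (inducedCar H G H' G' fG fH) := by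
  classical
  have part1 : ∀ x : Carrier H G, Mem H' G' (rawInduced H H' fG fH x.val) ∧
      (inducedCar H G H' G' fG fH x).val = rawInduced H H' fG fH x.val := by
    intro x
    have hm := mem_rawInduced hfG hinj x.2
    refine ⟨hm, ?_⟩
    simp only [inducedCar]
    exact congrArg Subtype.val (dif_pos hm)
  have hcomm : ∀ L : List (List (Ltr H)),
      (L.map (rawInduced H H' fG fH)).flatten = rawInduced H H' fG fH L.flatten := by
    intro L
    induction L with
    | nil => rfl
    | cons a L ih =>
      rw [List.map_cons, List.flatten_cons, List.flatten_cons, ih]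
      simp [rawInduced]
  refine ⟨part1, ⟨?_, ?_⟩, ?_⟩
  · -- D preservation
    intro W hW
    have hW' : InD H G (W.map Subtype.val) := hW
    have hSclique : G.IsClique {i | ∃ u ∈ W.map Subtype.val, i ∈ verts H u} := hW'.2.1
    have hSinj : ∀ a ∈ {i | ∃ u ∈ W.map Subtype.val, i ∈ verts H u},
        ∀ b ∈ {i | ∃ u ∈ W.map Subtype.val, i ∈ verts H u}, fG a = fG b → a = b := by
      intro a ha b hb h
      by_contra hne
      exact injOn_of_clique hfG hSclique a ha b hb hne h
    have hmap : (W.map (inducedCar H G H' G' fG fH)).map Subtype.val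
        = (W.map Subtype.val).map (rawInduced H H' fG fH) := by
      erw [List.map_map, List.map_map]
      apply List.map_congr_left
      intro x _
      exact (part1 x).2
    have hsub : ∀ i k : ℕ,
        verts H ((((W.map Subtype.val).drop i).take k).flatten)
          ⊆ {i | ∃ u ∈ W.map Subtype.val, i ∈ verts H u} := by
      intro i k v hv
      obtain ⟨x, hx, rfl⟩ := hv
      rw [List.mem_flatten] at hx
      obtain ⟨u, hu, hxu⟩ := hx
      have hmem : u ∈ W.map Subtype.val :=
        ((List.take_sublist _ _).trans (List.drop_sublist _ _)).mem hu
      exact ⟨u, hmem, ⟨x, hxu, rfl⟩⟩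
    show InD H' G' ((W.map (inducedCar H G H' G' fG fH)).map Subtype.val)
    rw [hmap]
    refine ⟨?_, ?_, ?_⟩
    · rintro u hu
      rw [List.mem_map] at hu
      obtain ⟨u₀, hu₀, rfl⟩ := hu
      exact mem_rawInduced hfG hinj (hW'.1 u₀ hu₀)
    · have himg : {i' | ∃ u ∈ (W.map Subtype.val).map (rawInduced H H' fG fH),
          i' ∈ verts H' u} = fG '' {i | ∃ u ∈ W.map Subtype.val, i ∈ verts H u} := by
        ext i'
        simp only [Set.mem_setOf_eq, List.mem_map, Set.mem_image]
        constructor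
        · rintro ⟨u, ⟨u₀, hu₀, rfl⟩, hi⟩
          rw [verts_rawInduced] at hi
          obtain ⟨a, ha, rfl⟩ := hi
          exact ⟨a, ⟨u₀, hu₀, ha⟩, rfl⟩
        · rintro ⟨a, ⟨u₀, hu₀, ha⟩, rfl⟩
          exact ⟨_, ⟨u₀, hu₀, rfl⟩, by rw [verts_rawInduced]; exact ⟨a, ha, rfl⟩⟩
      rw [himg]
      exact isClique_image hfG hSclique
    · intro i j hij hj
      rw [List.length_map] at hj
      have hc2 : ((((W.map Subtype.val).map (rawInduced H H' fG fH)).drop i).take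
            (j + 1 - i)).flatten
          = rawInduced H H' fG fH ((((W.map Subtype.val).drop i).take (j + 1 - i)).flatten) := by
        rw [← List.map_drop, ← List.map_take]
        exact hcomm _
      rw [hc2, red_rawInduced_of_injOn hinj hSinj (hsub i (j + 1 - i))]
      apply isCycRed_rawInduced hinj (hW'.2.2 i j hij hj)
      intro a ha b hb hab
      exact injOn_of_clique hfG hSclique a (hsub _ _ (verts_red _ ha))
        b (hsub _ _ (verts_red _ hb)) hab
  · -- Π preservation
    intro W hW
    have hW' : InD H G (W.map Subtype.val) := hW
    have hSclique : G.IsClique {i | ∃ u ∈ W.map Subtype.val, i ∈ verts H u} := hW'.2.1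
    have hSinj : ∀ a ∈ {i | ∃ u ∈ W.map Subtype.val, i ∈ verts H u},
        ∀ b ∈ {i | ∃ u ∈ W.map Subtype.val, i ∈ verts H u}, fG a = fG b → a = b := by
      intro a ha b hb h
      by_contra hne
      exact injOn_of_clique hfG hSclique a ha b hb hne h
    have hmap : (W.map (inducedCar H G H' G' fG fH)).map Subtype.val
        = (W.map Subtype.val).map (rawInduced H H' fG fH) := by
      erw [List.map_map, List.map_map]
      apply List.map_congr_left
      intro x _
      exact (part1 x).2
    have hflat : verts H (W.map Subtype.val).flatten
        ⊆ {i | ∃ u ∈ W.map Subtype.val, i ∈ verts H u} := by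
      intro v hv
      obtain ⟨x, hx, rfl⟩ := hv
      rw [List.mem_flatten] at hx
      obtain ⟨u, hu, hxu⟩ := hx
      exact ⟨u, hu, ⟨x, hxu, rfl⟩⟩
    have hMem : Mem H G (red H (W.map Subtype.val).flatten) := by
      constructor
      · rcases eq_or_ne (W.map Subtype.val) [] with h0 | h0
        · rw [h0]
          rw [show (([] : List (List (Ltr H))).flatten) = [] from rfl,
            red_of_isRed H (isRed_nil H)]
          exact isCycRed_nil H
        · have hlen : 0 < (W.map Subtype.val).length := List.length_pos_iff.2 h0
          have h2 := hW'.2.2 0 ((W.map Subtype.val).length - 1) (Nat.zero_le _) (by omega)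
          rw [Nat.sub_zero, Nat.sub_add_cancel hlen, List.drop_zero, List.take_length] at h2
          exact h2
      · exact hSclique.subset fun v hv => hflat (verts_red _ hv)
    have hMem' : Mem H' G' (rawInduced H H' fG fH (red H (W.map Subtype.val).flatten)) :=
      mem_rawInduced hfG hinj hMem
    have e1 : ((W.map (inducedCar H G H' G' fG fH)).map Subtype.val).flatten
        = rawInduced H H' fG fH (W.map Subtype.val).flatten := by
      rw [hmap]
      exact hcomm _
    have hred : red H' (rawInduced H H' fG fH (W.map Subtype.val).flatten)
        = rawInduced H H' fG fH (red H (W.map Subtype.val).flatten) :=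
      red_rawInduced_of_injOn hinj hSinj hflat
    have hM2 : Mem H' G'
        (red H' (((W.map (inducedCar H G H' G' fG fH)).map Subtype.val).flatten)) := by
      rw [e1, hred]; exact hMem'
    have hval : (pgPi H' G' (W.map (inducedCar H G H' G' fG fH))).val
        = red H' (((W.map (inducedCar H G H' G' fG fH)).map Subtype.val).flatten) := by
      simp only [pgPi]
      exact congrArg Subtype.val (dif_pos hM2)
    have hval2 : (pgPi H G W).val = red H (W.map Subtype.val).flatten := by
      simp only [pgPi]
      exact congrArg Subtype.val (dif_pos hMem)
    apply Subtype.ext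
    rw [hval, e1, hred, (part1 _).2, hval2]
  · -- torsion-free kernel
    intro x hx _
    apply Subtype.ext
    have h := congrArg Subtype.val hx
    rw [(part1 x).2] at h
    have h2 : List.map (fun y : Ltr H => (⟨fG y.1, fH y.1 y.2⟩ : Ltr H')) x.val = [] := h
    rw [List.map_eq_nil_iff] at h2
    rw [h2]
    rfl


end PaperPG
end

section
/- Let M = {1, a, a⁻¹} be a three-element set with involution (−)⁻¹ fixing 1 and exchanging a and a⁻¹. Let D be the set of finite words w over M such that the word obtained from w by deleting all occurrences of 1 alternates between a and a⁻¹ (i.e. has no two consecutive equal letters), and define Π : D → M by Π(w) = 1, a, or a⁻¹ according as the number of occurrences of a in w minus the number of occurrences of a⁻¹ in w equals 0, 1, or −1 (these are the only possible values for w ∈ D). Then (M, D, Π, (−)⁻¹) is a partial group (the free partial group on one generator). -/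
set_option linter.unusedSectionVars false

open Monoid

namespace PaperPG

/-- The domain of the free partial group on one generator: words over
`M = {1, a, a⁻¹}` (realised as `ZMod 3` with `0 ↔ 1`, `1 ↔ a`, `2 ↔ a⁻¹`) such that, after
deleting all occurrences of the unit, the remaining letters alternate (no two consecutive
equal letters). -/
def Dfree : Set (List (ZMod 3)) :=
  {w | (w.filter fun x => x ≠ 0).Chain' (· ≠ ·)}

/-- The product of the free partial group on one generator: `1`, `a` or `a⁻¹` according as
the number of occurrences of `a` minus the number of occurrences of `a⁻¹` is `0`, `1`
or `-1`. -/
def piFree (w : List (ZMod 3)) : ZMod 3 :=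
  if ((w.count 1 : ℤ) - (w.count 2 : ℤ)) = 0 then 0
  else if ((w.count 1 : ℤ) - (w.count 2 : ℤ)) = 1 then 1
  else if ((w.count 1 : ℤ) - (w.count 2 : ℤ)) = -1 then 2
  else 0

/-! ### Auxiliary lemmas for Statement 17 -/

/-- The count difference of a word. -/
def dif (w : List (ZMod 3)) : ℤ := (w.count 1 : ℤ) - (w.count 2 : ℤ)

lemma tri : ∀ t : ZMod 3, t = 0 ∨ t = 1 ∨ t = 2 := by decide

lemma flip_eq : ∀ x b : ZMod 3, x ≠ 0 → b ≠ 0 → x ≠ -b → x = b := by decide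

lemma eq_neg_of_ne : ∀ x t : ZMod 3, x ≠ 0 → t ≠ 0 → x ≠ t → x = -t := by decide

lemma neg_ne_self : ∀ b : ZMod 3, b ≠ 0 → -b ≠ b := by decide

lemma piFree_eq (w : List (ZMod 3)) :
    piFree w = if dif w = 0 then 0 else if dif w = 1 then 1
      else if dif w = -1 then 2 else 0 := rfl

lemma piFree_congr {w₁ w₂ : List (ZMod 3)} (h : dif w₁ = dif w₂) : piFree w₁ = piFree w₂ := by
  rw [piFree_eq, piFree_eq, h]

lemma dif_append (u v : List (ZMod 3)) : dif (u ++ v) = dif u + dif v := by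
  simp [dif, List.count_append]; ring

lemma delta_eq (x : ZMod 3) (hx : x ≠ 0) :
    (if x = 1 then (1:ℤ) else if x = 2 then -1 else 0) = if x = 1 then 1 else -1 := by
  rcases (tri x) with h|h|h <;> subst h
  · exact absurd rfl hx
  · rw [if_pos rfl, if_pos rfl]
  · rw [if_neg (by decide : ¬(2:ZMod 3) = 1), if_pos (rfl : (2:ZMod 3) = 2),
      if_neg (by decide : ¬(2:ZMod 3) = 1)]

lemma dif_cons (x : ZMod 3) (l : List (ZMod 3)) :
    dif (x :: l) = (if x = 1 then 1 else if x = 2 then -1 else 0) + dif l := by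
  rcases (tri x) with h|h|h <;> subst h <;> unfold dif
  · rw [List.count_cons_of_ne (by decide : (0:ZMod 3) ≠ 1),
      List.count_cons_of_ne (by decide : (0:ZMod 3) ≠ 2), if_neg (by decide), if_neg (by decide)]
    ring
  · rw [List.count_cons_self, List.count_cons_of_ne (by decide : (1:ZMod 3) ≠ 2), if_pos rfl]
    push_cast; ring
  · rw [List.count_cons_self, List.count_cons_of_ne (by decide : (2:ZMod 3) ≠ 1),
      if_neg (by decide), if_pos rfl]
    push_cast; ring

lemma dif_filter (w : List (ZMod 3)) : dif (w.filter fun x => x ≠ 0) = dif w := by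
  simp only [dif]
  rw [List.count_filter (by decide), List.count_filter (by decide)]

lemma mem_of_getLast?' {l : List (ZMod 3)} {a : ZMod 3} (h : l.getLast? = some a) : a ∈ l := by
  obtain ⟨hne, rfl⟩ := List.mem_getLast?_eq_getLast h
  exact List.getLast_mem hne

lemma nonzero_of_mem_filter {w : List (ZMod 3)} {x : ZMod 3}
    (h : x ∈ w.filter fun x => x ≠ 0) : x ≠ 0 := by
  simpa using List.of_mem_filter h

/-- Key structure lemma for nonzero alternating words. -/
lemma key (l : List (ZMod 3)) (h0 : ∀ x ∈ l, x ≠ 0) (hc : l.Chain' (· ≠ ·)) :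
    (dif l = 0 ∧ ∀ a ∈ l.head?, ∀ b ∈ l.getLast?, a = -b) ∨
    (∃ t, t ≠ 0 ∧ l.head? = some t ∧ l.getLast? = some t ∧
      dif l = (if t = 1 then 1 else -1)) := by
  induction l with
  | nil => left; exact ⟨rfl, by simp⟩
  | cons x l ih =>
    have hx : x ≠ 0 := h0 x (by simp)
    rw [List.Chain', List.isChain_cons] at hc
    have hdc := dif_cons x l
    rcases ih (fun y hy => h0 y (by simp [hy])) hc.2 with ⟨hd, hh⟩ | ⟨t, ht0, hh, hl, hd⟩
    · rcases eq_or_ne l [] with rfl | hne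
      · right
        refine ⟨x, hx, rfl, rfl, ?_⟩
        rw [hdc, show dif [] = 0 from rfl, add_zero]
        exact delta_eq x hx
      · obtain ⟨h, l', rfl⟩ := List.exists_cons_of_ne_nil hne
        obtain ⟨b, hb⟩ := Option.isSome_iff_exists.mp (List.getLast?_isSome.mpr hne)
        have hhb : h = -b := hh h rfl b hb
        have hb0 : b ≠ 0 := h0 b (List.mem_cons_of_mem _ (mem_of_getLast?' hb))
        have hxh : x ≠ h := hc.1 h rfl
        have hxb : x = b := flip_eq x b hx hb0 (hhb ▸ hxh)
        right
        refine ⟨x, hx, rfl, ?_, ?_⟩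
        · rw [List.getLast?_cons_cons, hb, hxb]
        · rw [hdc, hd, add_zero]; exact delta_eq x hx
    · have hne : l ≠ [] := by intro e; rw [e] at hh; simp at hh
      obtain ⟨h, l', rfl⟩ := List.exists_cons_of_ne_nil hne
      have hxt : x ≠ t := by
        have := hc.1 h rfl
        simp only [List.head?_cons, Option.some.injEq] at hh
        rwa [hh] at this
      have hxnt : x = -t := eq_neg_of_ne x t hx ht0 hxt
      left
      constructor
      · rw [hdc, hd, hxnt]
        rcases (tri t) with h'|h'|h' <;> subst h'
        · exact absurd rfl ht0
        · rw [if_pos rfl, if_neg (by decide : ¬(-1:ZMod 3) = 1),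
            if_pos (by decide : (-1 : ZMod 3) = 2)]; ring
        · rw [if_neg (by decide : ¬(2:ZMod 3) = 1), if_pos (by decide : (-2 : ZMod 3) = 1)]; ring
      · intro a ha b hb
        rw [List.head?_cons, Option.mem_def, Option.some.injEq] at ha
        rw [List.getLast?_cons_cons, Option.mem_def, hl, Option.some.injEq] at hb
        subst ha; subst hb
        exact hxnt


/-- `({1, a, a⁻¹}, Dfree, piFree, neg)` is a partial group: negation is the
involution fixing the unit and exchanging `a` and `a⁻¹`, for every word of the domain the
count difference is `0`, `1` or `-1`, and the axioms (D1), (D2), (P1), (P2), (P3) hold. -/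
theorem statement17 :
    -- the inversion is the involution fixing `1` and exchanging `a` and `a⁻¹`
    (-(0 : ZMod 3) = 0 ∧ -(1 : ZMod 3) = 2 ∧ -(2 : ZMod 3) = 1) ∧
    -- for words of the domain the count difference is `0`, `1` or `-1`
    (∀ w ∈ Dfree, ((w.count 1 : ℤ) - (w.count 2 : ℤ)) = 0 ∨
      ((w.count 1 : ℤ) - (w.count 2 : ℤ)) = 1 ∨
      ((w.count 1 : ℤ) - (w.count 2 : ℤ)) = -1) ∧
    -- (D1)
    (∀ x : ZMod 3, [x] ∈ Dfree) ∧
    -- (D2)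
    (∀ u v : List (ZMod 3), u ++ v ∈ Dfree → u ∈ Dfree ∧ v ∈ Dfree) ∧
    -- (P1)
    (∀ x : ZMod 3, piFree [x] = x) ∧
    -- (P2)
    (∀ u v w : List (ZMod 3), u ++ v ++ w ∈ Dfree →
      u ++ [piFree v] ++ w ∈ Dfree ∧
        piFree (u ++ v ++ w) = piFree (u ++ [piFree v] ++ w)) ∧
    -- (P3)
    (∀ u ∈ Dfree, (u.map Neg.neg).reverse ++ u ∈ Dfree ∧
      piFree ((u.map Neg.neg).reverse ++ u) = piFree []) := by
  refine ⟨by decide, ?_, ?_, ?_, by decide, ?_, ?_⟩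
  · -- count difference in {0, 1, -1}
    intro w hw
    have h0 : ∀ x ∈ w.filter fun x => x ≠ 0, x ≠ 0 := fun x hx => nonzero_of_mem_filter hx
    show dif w = 0 ∨ dif w = 1 ∨ dif w = -1
    rcases key _ h0 hw with ⟨hd, -⟩ | ⟨t, ht0, -, -, hd⟩
    · left; rw [← dif_filter]; exact hd
    · rcases tri t with h|h|h <;> subst h
      · exact absurd rfl ht0
      · right; left; rw [← dif_filter, hd, if_pos rfl]
      · right; right; rw [← dif_filter, hd, if_neg (by decide : ¬(2:ZMod 3) = 1)]
  · -- (D1)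
    intro x
    show ([x].filter fun x => x ≠ 0).Chain' (· ≠ ·)
    rcases Bool.eq_false_or_eq_true (decide (x ≠ 0)) with h|h <;>
      rw [List.filter_singleton, h] <;>
      first | exact List.isChain_nil | exact List.isChain_singleton x
  · -- (D2)
    intro u v h
    have h' : ((u.filter fun x => x ≠ 0) ++ (v.filter fun x => x ≠ 0)).Chain' (· ≠ ·) := by
      rw [← List.filter_append]; exact h
    rw [List.Chain', List.isChain_append] at h'
    exact ⟨h'.1, h'.2.1⟩
  · -- (P2)
    intro u v w h
    have h' : (((u.filter fun x => x ≠ 0) ++ (v.filter fun x => x ≠ 0)) ++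
        (w.filter fun x => x ≠ 0)).Chain' (· ≠ ·) := by
      rw [← List.filter_append, ← List.filter_append]; exact h
    rw [List.Chain', List.isChain_append] at h'
    obtain ⟨huv, hw, J1⟩ := h'
    rw [List.isChain_append] at huv
    obtain ⟨hu, hv, J2⟩ := huv
    have hv0 : ∀ x ∈ v.filter fun x => x ≠ 0, x ≠ 0 := fun x hx => nonzero_of_mem_filter hx
    have hdfv := dif_filter v
    rcases key _ hv0 hv with ⟨hd, hh⟩ | ⟨t, ht0, hhd, hlt, hd⟩
    · -- dif v = 0, piFree v = 0
      have hdv : dif v = 0 := by rw [← hdfv]; exact hd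
      have hpv : piFree v = 0 := by rw [piFree_eq, hdv, if_pos rfl]
      constructor
      · show ((u ++ [piFree v] ++ w).filter fun x => x ≠ 0).Chain' (· ≠ ·)
        have e : ((u ++ [piFree v] ++ w).filter fun x => x ≠ 0) =
            (u.filter fun x => x ≠ 0) ++ (w.filter fun x => x ≠ 0) := by
          rw [List.filter_append, List.filter_append, hpv,
            show ([(0 : ZMod 3)].filter fun x => x ≠ 0) = [] from rfl, List.append_nil]
        rw [e, List.Chain', List.isChain_append]
        refine ⟨hu, hw, ?_⟩
        intro a ha b hb
        rcases eq_or_ne (v.filter fun x => x ≠ 0) [] with hfv | hfv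
        · refine J1 a ?_ b hb
          rw [hfv, List.append_nil]; exact ha
        · obtain ⟨c, hc⟩ := Option.isSome_iff_exists.mp (List.getLast?_isSome.mpr hfv)
          obtain ⟨hd', l', hfveq⟩ := List.exists_cons_of_ne_nil hfv
          have hhc : hd' = -c := hh hd' (by rw [hfveq]; rfl) c hc
          have hac : a ≠ hd' := J2 a ha hd' (by rw [hfveq]; rfl)
          have ha0 : a ≠ 0 := nonzero_of_mem_filter (mem_of_getLast?' ha)
          have hc0 : c ≠ 0 := nonzero_of_mem_filter (mem_of_getLast?' hc)
          have hac2 : a = c := flip_eq a c ha0 hc0 (by rw [← hhc]; exact hac)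
          have hcb : c ≠ b := J1 c (by rw [List.getLast?_append_of_ne_nil _ hfv]; exact hc) b hb
          rw [hac2]; exact hcb
      · apply piFree_congr
        rw [dif_append, dif_append, dif_append, dif_append, hpv, hdv,
          show dif [(0 : ZMod 3)] = 0 from by decide]
    · -- dif v = ±1, piFree v = t
      have hdv : dif v = if t = 1 then 1 else -1 := by rw [← hdfv]; exact hd
      have hpv : piFree v = t := by
        rcases tri t with h'|h'|h' <;> subst h'
        · exact absurd rfl ht0
        · rw [if_pos rfl] at hdv
          rw [piFree_eq, hdv]; norm_num
        · rw [if_neg (by decide : ¬(2:ZMod 3) = 1)] at hdv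
          rw [piFree_eq, hdv]; norm_num
      have hFt : ([t].filter fun x => x ≠ 0) = [t] := by
        simp [List.filter_singleton, ht0]
      have hvne : (v.filter fun x => x ≠ 0) ≠ [] := by
        intro e; rw [e] at hhd; simp at hhd
      constructor
      · show ((u ++ [piFree v] ++ w).filter fun x => x ≠ 0).Chain' (· ≠ ·)
        have e : ((u ++ [piFree v] ++ w).filter fun x => x ≠ 0) =
            ((u.filter fun x => x ≠ 0) ++ [t]) ++ (w.filter fun x => x ≠ 0) := by
          rw [List.filter_append, List.filter_append, hpv, hFt]
        rw [e, List.Chain', List.isChain_append]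
        refine ⟨?_, hw, ?_⟩
        · rw [List.isChain_append]
          refine ⟨hu, List.isChain_singleton t, ?_⟩
          intro a ha b hb
          rw [List.head?_cons, Option.mem_def, Option.some.injEq] at hb
          rw [← hb]
          exact J2 a ha t (by rw [hhd]; rfl)
        · intro a ha b hb
          rw [Option.mem_def, List.getLast?_concat, Option.some.injEq] at ha
          rw [← ha]
          exact J1 t (by rw [List.getLast?_append_of_ne_nil _ hvne, hlt]; rfl) b hb
      · apply piFree_congr
        rw [dif_append, dif_append, dif_append, dif_append, hpv,
          show dif [t] = dif v from by
            rw [dif_cons, show dif [] = 0 from rfl, add_zero, delta_eq t ht0, hdv]]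
  · -- (P3)
    intro u hu
    have hu0 : ∀ x ∈ u.filter fun x => x ≠ 0, x ≠ 0 := fun x hx => nonzero_of_mem_filter hx
    have hmapeq : ((u.map Neg.neg).filter fun x => x ≠ 0) =
        (u.filter fun x => x ≠ 0).map Neg.neg := by
      rw [List.filter_map]
      congr 1
      exact List.filter_congr fun x _ => by rcases tri x with h|h|h <;> subst h <;> rfl
    constructor
    · show (((u.map Neg.neg).reverse ++ u).filter fun x => x ≠ 0).Chain' (· ≠ ·)
      have e : (((u.map Neg.neg).reverse ++ u).filter fun x => x ≠ 0) =
          ((u.filter fun x => x ≠ 0).map Neg.neg).reverse ++ (u.filter fun x => x ≠ 0) := by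
        rw [List.filter_append, List.filter_reverse, hmapeq]
      rw [e, List.Chain', List.isChain_append]
      refine ⟨?_, hu, ?_⟩
      · rw [List.isChain_reverse, List.isChain_map]
        exact List.IsChain.imp (fun a b hab e => hab (neg_injective e).symm) hu
      · intro a ha b hb
        rw [Option.mem_def] at hb
        rw [Option.mem_def, List.getLast?_reverse, List.head?_map, hb, Option.map_some,
          Option.some.injEq] at ha
        have hb0 : b ≠ 0 := nonzero_of_mem_filter (List.mem_of_mem_head? hb)
        rw [← ha]
        exact neg_ne_self b hb0
    · apply piFree_congr
      have c1 : (u.map Neg.neg).count 1 = u.count 2 := by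
        have := List.count_map_of_injective u Neg.neg neg_injective 2
        rwa [show -(2 : ZMod 3) = 1 from by decide] at this
      have c2 : (u.map Neg.neg).count 2 = u.count 1 := by
        have := List.count_map_of_injective u Neg.neg neg_injective 1
        rwa [show -(1 : ZMod 3) = 2 from by decide] at this
      have hrev : dif (u.map Neg.neg).reverse = -dif u := by
        unfold dif
        rw [List.count_reverse, List.count_reverse, c1, c2]; ring
      rw [dif_append, hrev, show dif ([] : List (ZMod 3)) = 0 from by decide]
      ring




end PaperPG
end
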